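/- arXiv:2312.08835 — 2 statements merged into one kernel-verified Lean document; each statement's English description precedes it below -/
import Mathlib

section
/- For n even, n ≥ 4, and any real α, the function r ↦ r^{(2-n)/2} I_{(n-2)/2}(κr) = (κ/2)^{(n-2)/2} ∑_{k=0}^∞ (κr)^{2k} / (4^k k! ((n-2)/2 + k)!) extends to a smooth function on ℝⁿ (as a function of x with r = |x|) which lies in the kernel of the shifted Laplacian: (Δ_n - κ²)(|x|^{(2-n)/2} I_{(n-2)/2}(κ|x|)) = 0 on all of ℝⁿ. -/
open MeasureTheory Real Filter

namespace BesselAux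

/-- factorial-type bound predicate -/
def Bnd (c : ℕ → ℝ) (M q : ℝ) : Prop := ∀ k, |c k| ≤ M * q ^ k / (Nat.factorial k)

theorem Bnd.M_nonneg {c : ℕ → ℝ} {M q : ℝ} (h : Bnd c M q) : 0 ≤ M := by
  have := h 0
  simp at this
  exact le_trans (abs_nonneg _) this

theorem Bnd.shift {c : ℕ → ℝ} {M q : ℝ} (h : Bnd c M q) :
    Bnd (fun k => ((k : ℝ) + 1) * c (k + 1)) (M * q) q := by
  intro k
  have h1 := h (k + 1)
  have hk : (0:ℝ) < (k : ℝ) + 1 := by positivity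
  rw [abs_mul, abs_of_pos hk]
  have h2 : ((k : ℝ) + 1) * |c (k+1)| ≤ ((k : ℝ) + 1) * (M * q ^ (k+1) / (Nat.factorial (k+1))) := by
    gcongr
  refine h2.trans (le_of_eq ?_)
  rw [Nat.factorial_succ]
  have hfk : ((Nat.factorial k : ℝ)) ≠ 0 := by positivity
  push_cast
  field_simp
  ring

theorem Bnd.summable {c : ℕ → ℝ} {M q : ℝ} (h : Bnd c M q) (t : ℝ) :
    Summable (fun k : ℕ => c k * t ^ k) := by
  refine Summable.of_norm_bounded (g := fun k : ℕ => M * ((q * |t|) ^ k / (Nat.factorial k)))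
    ((Real.summable_pow_div_factorial (q * |t|)).mul_left M) (fun k => ?_)
  rw [norm_mul, norm_pow, Real.norm_eq_abs, Real.norm_eq_abs]
  calc |c k| * |t| ^ k ≤ (M * q ^ k / (Nat.factorial k)) * |t| ^ k := by
        gcongr; exact h k
    _ = M * ((q * |t|) ^ k / (Nat.factorial k)) := by rw [mul_pow]; ring

theorem Bnd.hasDerivAt {c : ℕ → ℝ} {M q : ℝ} (hq : 0 ≤ q) (h : Bnd c M q) (t : ℝ) :
    HasDerivAt (fun s : ℝ => ∑' k : ℕ, c k * s ^ k)
      (∑' k : ℕ, ((k : ℝ) + 1) * c (k + 1) * t ^ k) t := by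
  have hM : 0 ≤ M := h.M_nonneg
  set R : ℝ := |t| + 1 with hR
  have hRpos : 0 < R := by positivity
  have htR : t ∈ Metric.ball (0 : ℝ) R := by
    simp only [Metric.mem_ball, Real.dist_eq, sub_zero, hR]
    linarith
  set u : ℕ → ℝ := fun k => M * q * ((q * R) ^ (k - 1) / (Nat.factorial (k - 1))) with hu
  have hu_sum : Summable u := by
    rw [← summable_nat_add_iff 1]
    exact ((Real.summable_pow_div_factorial (q * R)).mul_left (M * q)).congr
      (fun k => by simp [u])
  have hbound : ∀ (k : ℕ) (y : ℝ), y ∈ Metric.ball (0 : ℝ) R →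
      ‖c k * ((k : ℝ) * y ^ (k - 1))‖ ≤ u k := by
    intro k y hy
    have hyR : |y| ≤ R := by
      simp only [Metric.mem_ball, Real.dist_eq, sub_zero] at hy; exact le_of_lt hy
    match k with
    | 0 => simp [u]; positivity
    | (j+1) =>
      have h1 := h (j + 1)
      simp only [u, Nat.add_sub_cancel]
      rw [norm_mul, norm_mul, Real.norm_eq_abs, Real.norm_eq_abs, norm_pow, Real.norm_eq_abs]
      have habs : |((j:ℕ):ℝ) + 1| = ((j:ℕ):ℝ) + 1 := abs_of_pos (by positivity)
      push_cast
      rw [habs]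
      calc |c (j+1)| * (((j:ℝ) + 1) * |y| ^ j)
          ≤ (M * q ^ (j+1) / (Nat.factorial (j+1))) * (((j:ℝ) + 1) * R ^ j) := by
            gcongr
        _ = M * q * ((q * R) ^ j / (Nat.factorial j)) := by
            rw [Nat.factorial_succ, mul_pow]
            have hfj : ((Nat.factorial j : ℝ)) ≠ 0 := by positivity
            push_cast
            field_simp
            ring
  have hder : HasDerivAt (fun s : ℝ => ∑' k : ℕ, c k * s ^ k)
      (∑' k : ℕ, c k * ((k : ℝ) * t ^ (k - 1))) t := by
    refine hasDerivAt_tsum_of_isPreconnected hu_sum Metric.isOpen_ball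
      ((convex_ball (0:ℝ) R).isPreconnected)
      (fun k y _ => ((hasDerivAt_pow k y).const_mul (c k))) ?_ htR (h.summable t) htR
    intro k y hy
    exact hbound k y hy
  convert hder using 1
  have hsum : Summable (fun k : ℕ => c k * ((k : ℝ) * t ^ (k - 1))) :=
    Summable.of_norm_bounded (g := u) hu_sum (fun k => hbound k t htR)
  rw [Summable.tsum_eq_zero_add hsum]
  simp only [Nat.cast_zero, zero_mul, mul_zero, zero_add]
  refine tsum_congr (fun k => ?_)
  push_cast
  ring

theorem Bnd.analyticSum {c : ℕ → ℝ} {M q : ℝ} (h : Bnd c M q) :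
    ContDiff ℝ (⊤ : WithTop ℕ∞) (fun s : ℝ => ∑' k : ℕ, c k * s ^ k) := by
  have hrad : (FormalMultilinearSeries.ofScalars ℝ c).radius = ⊤ := by
    apply FormalMultilinearSeries.radius_eq_top_of_summable_norm
    intro r
    refine Summable.of_norm_bounded (g := fun k : ℕ => M * ((q * r) ^ k / (Nat.factorial k)))
      ((Real.summable_pow_div_factorial (q * r)).mul_left M) (fun k => ?_)
    rw [norm_mul, norm_norm, norm_pow]
    rw [FormalMultilinearSeries.ofScalars_norm, Real.norm_eq_abs]
    have hr : ‖(r : ℝ)‖ = (r : ℝ) := by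
      rw [Real.norm_eq_abs, abs_of_nonneg r.coe_nonneg]
    rw [hr]
    calc |c k| * (r:ℝ) ^ k ≤ (M * q ^ k / (Nat.factorial k)) * (r:ℝ) ^ k := by
          gcongr; exact h k
      _ = M * ((q * r) ^ k / (Nat.factorial k)) := by rw [mul_pow]; ring
  have hsum_eq : (fun s : ℝ => ∑' k : ℕ, c k * s ^ k)
      = (FormalMultilinearSeries.ofScalars ℝ c).sum := by
    funext s
    rw [show (FormalMultilinearSeries.ofScalars ℝ c).sum s
        = FormalMultilinearSeries.ofScalarsSum c s from rfl,
      FormalMultilinearSeries.ofScalars_sum_eq]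
    exact tsum_congr fun k => by simp
  rw [contDiff_omega_iff_analyticOnNhd, hsum_eq]
  intro x _
  have hball : HasFPowerSeriesOnBall (FormalMultilinearSeries.ofScalars ℝ c).sum
      (FormalMultilinearSeries.ofScalars ℝ c) 0 ⊤ := by
    have := (FormalMultilinearSeries.ofScalars ℝ c).hasFPowerSeriesOnBall
      (by rw [hrad]; exact ENNReal.zero_lt_top)
    rwa [hrad] at this
  exact hball.analyticAt_of_mem (by simp [EMetric.mem_ball, edist_lt_top])

noncomputable def cf (kap : ℝ) (m : ℕ) : ℕ → ℝ :=
  fun k => kap ^ (2 * k) / (4 ^ k * (Nat.factorial k) * (Nat.factorial (m + k)))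

noncomputable def cf1 (kap : ℝ) (m : ℕ) : ℕ → ℝ := fun k => ((k : ℝ) + 1) * cf kap m (k + 1)

noncomputable def cf2 (kap : ℝ) (m : ℕ) : ℕ → ℝ := fun k => ((k : ℝ) + 1) * cf1 kap m (k + 1)

noncomputable def gf (kap : ℝ) (m : ℕ) (t : ℝ) : ℝ := ∑' k : ℕ, cf kap m k * t ^ k

noncomputable def g1f (kap : ℝ) (m : ℕ) (t : ℝ) : ℝ := ∑' k : ℕ, cf1 kap m k * t ^ k

noncomputable def g2f (kap : ℝ) (m : ℕ) (t : ℝ) : ℝ := ∑' k : ℕ, cf2 kap m k * t ^ k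

theorem cf_bnd (kap : ℝ) (m : ℕ) : Bnd (cf kap m) 1 (kap ^ 2 / 4) := by
  intro k
  unfold cf
  rw [pow_mul, abs_of_nonneg (by positivity), one_mul, div_pow, div_div]
  have hfac : (1:ℝ) ≤ (Nat.factorial (m + k) : ℝ) := by
    exact_mod_cast Nat.one_le_iff_ne_zero.mpr (Nat.factorial_ne_zero _)
  have h := le_mul_of_one_le_right
    (show (0:ℝ) ≤ 4 ^ k * (Nat.factorial k) by positivity) hfac
  exact div_le_div_of_nonneg_left (by positivity) (by positivity) h

theorem cf1_bnd (kap : ℝ) (m : ℕ) : Bnd (cf1 kap m) (1 * (kap ^ 2 / 4)) (kap ^ 2 / 4) :=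
  (cf_bnd kap m).shift

theorem hasDerivAt_gf (kap : ℝ) (m : ℕ) (t : ℝ) : HasDerivAt (gf kap m) (g1f kap m t) t :=
  (cf_bnd kap m).hasDerivAt (by positivity) t

theorem hasDerivAt_g1f (kap : ℝ) (m : ℕ) (t : ℝ) : HasDerivAt (g1f kap m) (g2f kap m t) t :=
  (cf1_bnd kap m).hasDerivAt (by positivity) t

theorem contDiff_gf (kap : ℝ) (m : ℕ) : ContDiff ℝ (⊤ : WithTop ℕ∞) (gf kap m) :=
  (cf_bnd kap m).analyticSum

theorem hcoeff (kap : ℝ) (m k n : ℕ) (hmr : (n : ℝ) = 2 * m + 2) :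
    kap ^ 2 * cf kap m k
      = (2 * (n : ℝ) * ((k : ℝ) + 1) + 4 * (k : ℝ) * ((k : ℝ) + 1)) * cf kap m (k + 1) := by
  unfold cf
  rw [hmr]
  have h1 : (Nat.factorial k : ℝ) ≠ 0 := by positivity
  have h2 : (Nat.factorial (m + k) : ℝ) ≠ 0 := by positivity
  have h3 : (4 : ℝ) ^ k ≠ 0 := by positivity
  rw [show m + (k + 1) = (m + k) + 1 by ring, Nat.factorial_succ, Nat.factorial_succ,
    show 2 * (k + 1) = 2 * k + 2 by ring, pow_add, pow_succ]
  push_cast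
  field_simp
  ring

/-- The key ODE identity. -/
theorem ode (kap : ℝ) (m n : ℕ) (hmr : (n : ℝ) = 2 * m + 2) (t : ℝ) :
    4 * t * g2f kap m t + 2 * (n : ℝ) * g1f kap m t = kap ^ 2 * gf kap m t := by
  have hsg : Summable (fun k : ℕ => cf kap m k * t ^ k) := (cf_bnd kap m).summable t
  have hsg1 : Summable (fun k : ℕ => cf1 kap m k * t ^ k) := (cf1_bnd kap m).summable t
  have e1 : kap ^ 2 * gf kap m t = ∑' k : ℕ, kap ^ 2 * (cf kap m k * t ^ k) := by
    rw [gf, tsum_mul_left]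
  have e2 : 2 * (n : ℝ) * g1f kap m t = ∑' k : ℕ, 2 * (n : ℝ) * (cf1 kap m k * t ^ k) := by
    rw [g1f, tsum_mul_left]
  have hterm : ∀ k : ℕ, kap ^ 2 * (cf kap m k * t ^ k) - 2 * (n : ℝ) * (cf1 kap m k * t ^ k)
      = (4 * (k : ℝ) * ((k : ℝ) + 1) * cf kap m (k + 1)) * t ^ k := by
    intro k
    have h := hcoeff kap m k n hmr
    simp only [cf1]
    linear_combination t ^ k * h
  have hsd : Summable (fun k : ℕ => (4 * (k : ℝ) * ((k : ℝ) + 1) * cf kap m (k + 1)) * t ^ k) := by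
    refine ((hsg.mul_left (kap ^ 2)).sub (hsg1.mul_left (2 * (n : ℝ)))).congr (fun k => ?_)
    exact hterm k
  have e3 : kap ^ 2 * gf kap m t - 2 * (n : ℝ) * g1f kap m t
      = ∑' k : ℕ, (4 * (k : ℝ) * ((k : ℝ) + 1) * cf kap m (k + 1)) * t ^ k := by
    rw [e1, e2, ← Summable.tsum_sub (hsg.mul_left (kap ^ 2)) (hsg1.mul_left (2 * (n : ℝ)))]
    exact tsum_congr hterm
  have e4 : ∑' k : ℕ, (4 * (k : ℝ) * ((k : ℝ) + 1) * cf kap m (k + 1)) * t ^ k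
      = 4 * t * g2f kap m t := by
    rw [Summable.tsum_eq_zero_add hsd]
    simp only [Nat.cast_zero, mul_zero, zero_mul, zero_add]
    rw [g2f, ← tsum_mul_left]
    refine tsum_congr (fun k => ?_)
    simp only [cf2, cf1]
    push_cast
    ring
  linarith [e3, e4]

end BesselAux

open BesselAux

/-- The Laplacian of a real-valued function on `EuclideanSpace ℝ (Fin n)`. -/
noncomputable def laplacian {n : ℕ} (f : EuclideanSpace ℝ (Fin n) → ℝ)
    (x : EuclideanSpace ℝ (Fin n)) : ℝ :=
  ∑ i : Fin n,
    fderiv ℝ (fun y => fderiv ℝ f y (EuclideanSpace.single i 1)) x (EuclideanSpace.single i 1)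

/-- The modified Bessel function of the first kind of integer order `m`,
`I_m(z) = ∑ₖ (z/2)^{2k+m}/(k! (m+k)!)`. -/
noncomputable def besselI (m : ℕ) (z : ℝ) : ℝ :=
  ∑' k : ℕ, (z / 2) ^ (2 * k + m) / ((Nat.factorial k) * (Nat.factorial (m + k)))

/-- For even `n ≥ 4` and `m = (n-2)/2`, the function
`r ↦ r^{(2-n)/2} I_m(κ r) = (κ/2)^m ∑ₖ (κr)^{2k}/(4^k k! (m+k)!)` extends to a smooth
function on ℝⁿ lying in the kernel of the shifted Laplacian `Δₙ - κ²`. -/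
theorem bessel_extension_kernel_shifted_laplacian
    (n : ℕ) (hn : 4 ≤ n) (heven : Even n) (κ : ℝ) (hκ : 0 < κ) :
    ∃ f : EuclideanSpace ℝ (Fin n) → ℝ,
      ContDiff ℝ (⊤ : ℕ∞) f ∧
      (∀ x : EuclideanSpace ℝ (Fin n),
        f x = (κ / 2) ^ ((n - 2) / 2) *
          ∑' k : ℕ, (κ * ‖x‖) ^ (2 * k) /
            (4 ^ k * (Nat.factorial k) * (Nat.factorial ((n - 2) / 2 + k)))) ∧
      (∀ x : EuclideanSpace ℝ (Fin n), x ≠ 0 →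
        f x = ‖x‖ ^ (((2 : ℝ) - n) / 2) * besselI ((n - 2) / 2) (κ * ‖x‖)) ∧
      (∀ x : EuclideanSpace ℝ (Fin n), laplacian f x - κ ^ 2 * f x = 0) := by
  set m : ℕ := (n - 2) / 2 with hm
  have hm2 : n = 2 * m + 2 := by
    obtain ⟨l, rfl⟩ := heven
    omega
  have hmr : (n : ℝ) = 2 * (m : ℝ) + 2 := by
    rw [hm2]; push_cast; ring
  set C : ℝ := (κ / 2) ^ m with hC
  refine ⟨fun x => C * gf κ m (‖x‖ ^ 2), ?_, ?_, ?_, ?_⟩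
  · -- smoothness
    exact contDiff_const.mul (((contDiff_gf κ m).of_le le_top).comp (contDiff_norm_sq ℝ))
  · -- tsum formula
    intro x
    show C * gf κ m (‖x‖ ^ 2) = _
    rw [gf, ← tsum_mul_left, ← tsum_mul_left]
    refine tsum_congr (fun k => ?_)
    unfold cf
    rw [mul_pow κ ‖x‖, pow_mul ‖x‖]
    ring
  · -- Bessel formula for x ≠ 0
    intro x hx0
    have hx : ‖x‖ ≠ 0 := by simpa [norm_eq_zero] using hx0
    have hexp : ((2 : ℝ) - n) / 2 = -(m : ℝ) := by rw [hmr]; ring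
    show C * gf κ m (‖x‖ ^ 2) = _
    rw [hexp, Real.rpow_neg (norm_nonneg x), Real.rpow_natCast]
    rw [besselI, gf, ← tsum_mul_left, ← tsum_mul_left]
    refine tsum_congr (fun k => ?_)
    unfold cf
    have hxm : ‖x‖ ^ m ≠ 0 := pow_ne_zero _ hx
    have h1 : (Nat.factorial k : ℝ) ≠ 0 := by positivity
    have h2 : (Nat.factorial (m + k) : ℝ) ≠ 0 := by positivity
    rw [show κ * ‖x‖ / 2 = (κ / 2) * ‖x‖ by ring, mul_pow (κ/2) ‖x‖, pow_add (κ/2),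
      pow_add ‖x‖, pow_mul (κ/2), pow_mul ‖x‖,
      show ((κ / 2) ^ 2 : ℝ) = κ ^ 2 / 4 by ring,
      div_pow (κ ^ 2), ← pow_mul κ]
    rw [hC, div_pow κ 2 m]
    field_simp
  · -- Laplacian
    intro x
    show laplacian (fun z : EuclideanSpace ℝ (Fin n) => C * gf κ m (‖z‖ ^ 2)) x
      - κ ^ 2 * (C * gf κ m (‖x‖ ^ 2)) = 0
    have hQ : ∀ y : EuclideanSpace ℝ (Fin n), HasFDerivAt (fun z : EuclideanSpace ℝ (Fin n) => ‖z‖ ^ 2) ((2:ℕ) • innerSL ℝ y) y :=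
      fun y => (hasStrictFDerivAt_norm_sq y).hasFDerivAt
    set t : ℝ := ‖x‖ ^ 2 with ht
    have hf : ∀ y : EuclideanSpace ℝ (Fin n), HasFDerivAt (fun z : EuclideanSpace ℝ (Fin n) => C * gf κ m (‖z‖ ^ 2))
        ((C * g1f κ m (‖y‖ ^ 2)) • ((2:ℕ) • innerSL ℝ y)) y := by
      intro y
      have := (((hasDerivAt_gf κ m (‖y‖ ^ 2)).const_mul C).comp_hasFDerivAt y (hQ y))
      exact this
    have hfder : ∀ y : EuclideanSpace ℝ (Fin n), fderiv ℝ (fun z : EuclideanSpace ℝ (Fin n) => C * gf κ m (‖z‖ ^ 2)) y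
        = (C * g1f κ m (‖y‖ ^ 2)) • ((2:ℕ) • innerSL ℝ y) := fun y => (hf y).fderiv
    have hsingle : ∀ (i : Fin n) (y : EuclideanSpace ℝ (Fin n)),
        (inner ℝ y (EuclideanSpace.single i (1:ℝ)) : ℝ) = y i := by
      intro i y
      rw [EuclideanSpace.inner_single_right]
      simp
    have hF : ∀ i : Fin n, (fun y : EuclideanSpace ℝ (Fin n) => fderiv ℝ (fun z : EuclideanSpace ℝ (Fin n) => C * gf κ m (‖z‖ ^ 2)) y
        (EuclideanSpace.single i (1:ℝ)))
        = fun y : EuclideanSpace ℝ (Fin n) => (2 * C) * (g1f κ m (‖y‖ ^ 2) * y i) := by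
      intro i
      funext y
      rw [hfder y]
      simp only [ContinuousLinearMap.smul_apply, innerSL_apply_apply, smul_eq_mul, nsmul_eq_mul]
      rw [hsingle i y]
      push_cast
      ring
    have hlap : laplacian (fun z : EuclideanSpace ℝ (Fin n) => C * gf κ m (‖z‖ ^ 2)) x
        = 2 * (n:ℝ) * C * g1f κ m t + 4 * C * g2f κ m t * t := by
      unfold laplacian
      have hterm : ∀ i : Fin n,
          fderiv ℝ (fun y : EuclideanSpace ℝ (Fin n) => fderiv ℝ (fun z : EuclideanSpace ℝ (Fin n) => C * gf κ m (‖z‖ ^ 2)) y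
            (EuclideanSpace.single i (1:ℝ))) x (EuclideanSpace.single i (1:ℝ))
          = 2 * C * g1f κ m t + 4 * C * g2f κ m t * (x i) ^ 2 := by
        intro i
        rw [hF i]
        have hg1y : HasFDerivAt (fun y : EuclideanSpace ℝ (Fin n) => g1f κ m (‖y‖ ^ 2))
            ((g2f κ m t) • ((2:ℕ) • innerSL ℝ x)) x := by
          have := (hasDerivAt_g1f κ m (‖x‖ ^ 2)).comp_hasFDerivAt x (hQ x)
          exact this
        have hcoe : (fun y : EuclideanSpace ℝ (Fin n) => y i)
            = ⇑(EuclideanSpace.proj (𝕜 := ℝ) (i := i)) := rfl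
        have hproj : HasFDerivAt (fun y : EuclideanSpace ℝ (Fin n) => y i)
            (EuclideanSpace.proj (𝕜 := ℝ) i : EuclideanSpace ℝ (Fin n) →L[ℝ] ℝ) x := by
          rw [hcoe]
          exact ContinuousLinearMap.hasFDerivAt _
        have hmul := (hg1y.mul hproj).const_mul (2 * C)
        rw [HasFDerivAt.fderiv (f := fun y : EuclideanSpace ℝ (Fin n) => 2 * C * (g1f κ m (‖y‖ ^ 2) * y i)) hmul]
        simp only [ContinuousLinearMap.smul_apply, ContinuousLinearMap.add_apply,
          smul_eq_mul, nsmul_eq_mul, innerSL_apply_apply]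
        rw [hsingle i x]
        have hpr : (EuclideanSpace.proj (𝕜 := ℝ) i : EuclideanSpace ℝ (Fin n) →L[ℝ] ℝ)
            (EuclideanSpace.single i (1:ℝ)) = 1 := by
          simp
        rw [hpr]
        push_cast
        ring
      rw [Finset.sum_congr rfl (fun i _ => hterm i)]
      rw [Finset.sum_add_distrib, Finset.sum_const, Finset.card_univ, Fintype.card_fin,
        nsmul_eq_mul, ← Finset.mul_sum]
      have hns : (∑ i : Fin n, (x i) ^ 2) = t := by
        rw [ht, PiLp.norm_sq_eq_of_L2]
        exact Finset.sum_congr rfl (fun i _ => by rw [Real.norm_eq_abs, sq_abs])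
      rw [hns]
      ring
    rw [hlap]
    have hode := ode κ m n hmr t
    linear_combination C * hode
end

section
/- For integers m ≥ 0, ℓ ≥ 0 and 0 ≤ j ≤ m with p_j = 2m - 2j, one has ∏_{k=0}^{m} 1/(p_j - p_k + 1 + 2ℓ) = (-1)^{j-ℓ} / ((2(j-ℓ)-1)!! · (2(m-j+ℓ)+1)!!) when j > ℓ, and = (2(ℓ-j)-1)!! / (2(m-j+ℓ)+1)!! when j ≤ ℓ. -/
open Finset Nat

lemma odd_prod_eq (e : ℕ) : ∏ k ∈ Finset.range e, (2 * k + 1) = (2 * e - 1)‼ := by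
  cases e with
  | zero => simp
  | succ n =>
    rw [show 2 * (n + 1) - 1 = 2 * n + 1 by omega, Nat.doubleFactorial_eq_prod_odd,
      Finset.prod_range_succ']
    simp

lemma neg_odd_prod (d : ℕ) :
    ∏ k ∈ Finset.range d, (2 * (k : ℝ) - 2 * d + 1) = (-1) ^ d * ((2 * d - 1)‼ : ℕ) := by
  have h := Finset.prod_range_reflect (fun k => (2 * (k : ℝ) - 2 * d + 1)) d
  rw [← h]
  have hcongr : ∀ k ∈ Finset.range d,
      (2 * ((d - 1 - k : ℕ) : ℝ) - 2 * d + 1) = (-1) * (2 * (k : ℝ) + 1) := by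
    intro k hk
    simp only [Finset.mem_range] at hk
    have hc : ((d - 1 - k : ℕ) : ℝ) = (d : ℝ) - 1 - k := by
      have h1 : k ≤ d - 1 := by omega
      rw [Nat.cast_sub h1, Nat.cast_sub (show 1 ≤ d by omega)]
      norm_num
    rw [hc]; ring
  rw [Finset.prod_congr rfl hcongr, Finset.prod_mul_distrib, Finset.prod_const]
  have : ∏ k ∈ Finset.range d, (2 * (k : ℝ) + 1) = ((2 * d - 1)‼ : ℕ) := by
    rw [← odd_prod_eq d]
    push_cast
    rfl
  rw [this]
  simp [Finset.card_range]

/-- For `pⱼ = 2m - 2j` and integers `m, ℓ ≥ 0`, `0 ≤ j ≤ m`: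
`∏_{k=0}^{m} 1/(pⱼ - pₖ + 1 + 2ℓ)` equals
`(-1)^{j-ℓ}/((2(j-ℓ)-1)!! (2(m-j+ℓ)+1)!!)` if `j > ℓ`, and
`(2(ℓ-j)-1)!!/(2(m-j+ℓ)+1)!!` if `j ≤ ℓ`. -/
theorem product_reciprocal_odd_shifts (m ℓ j : ℕ) (hj : j ≤ m) :
    (ℓ < j →
      ∏ k ∈ Finset.range (m + 1), (1 / (2 * (k : ℝ) - 2 * j + 1 + 2 * ℓ)) =
        (-1 : ℝ) ^ (j - ℓ) /
          ((2 * (j - ℓ) - 1)‼ * (2 * (m - j + ℓ) + 1)‼)) ∧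
    (j ≤ ℓ →
      ∏ k ∈ Finset.range (m + 1), (1 / (2 * (k : ℝ) - 2 * j + 1 + 2 * ℓ)) =
        ((2 * (ℓ - j) - 1)‼ : ℝ) / ((2 * (m - j + ℓ) + 1)‼)) := by
  constructor
  · intro hlj
    set d := j - ℓ with hd
    have hdj : ℓ + d = j := by omega
    have hdm : d ≤ m := by omega
    have hjc : (j : ℝ) = (ℓ : ℝ) + d := by exact_mod_cast congrArg (Nat.cast (R := ℝ)) hdj.symm
    have h1 : ∀ k : ℕ, (2 * (k : ℝ) - 2 * j + 1 + 2 * ℓ) = (2 * (k : ℝ) - 2 * d + 1) := by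
      intro k; rw [hjc]; ring
    have key : ∏ k ∈ Finset.range (m + 1), (2 * (k : ℝ) - 2 * j + 1 + 2 * ℓ) =
        (-1) ^ d * (((2 * d - 1)‼ * (2 * (m - j + ℓ) + 1)‼ : ℕ) : ℝ) := by
      rw [show m + 1 = d + (m + 1 - d) by omega, Finset.prod_range_add]
      have h2 : ∏ k ∈ Finset.range d, (2 * (k : ℝ) - 2 * j + 1 + 2 * ℓ) =
          (-1) ^ d * ((2 * d - 1)‼ : ℕ) := by
        rw [Finset.prod_congr rfl (fun k _ => h1 k), neg_odd_prod]
      have h3 : ∏ k ∈ Finset.range (m + 1 - d),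
          (2 * ((d + k : ℕ) : ℝ) - 2 * j + 1 + 2 * ℓ) = ((2 * (m - j + ℓ) + 1)‼ : ℕ) := by
        have hc : ∀ k ∈ Finset.range (m + 1 - d),
            (2 * ((d + k : ℕ) : ℝ) - 2 * j + 1 + 2 * ℓ) = ((2 * k + 1 : ℕ) : ℝ) := by
          intro k _
          rw [h1]
          push_cast
          ring
        rw [Finset.prod_congr rfl hc, ← Nat.cast_prod, odd_prod_eq,
          show 2 * (m + 1 - d) - 1 = 2 * (m - j + ℓ) + 1 by omega]
      rw [h2, h3]
      push_cast
      ring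
    have hA : (((2 * d - 1)‼ : ℕ) : ℝ) ≠ 0 := by
      exact_mod_cast (Nat.doubleFactorial_pos _).ne'
    have hB : (((2 * (m - j + ℓ) + 1)‼ : ℕ) : ℝ) ≠ 0 := by
      exact_mod_cast (Nat.doubleFactorial_pos _).ne'
    simp only [one_div]
    rw [Finset.prod_inv_distrib, key]
    push_cast
    rw [mul_inv, ← inv_pow, inv_neg, inv_one, div_eq_mul_inv, mul_inv]
  · intro hjl
    set e := ℓ - j with he
    have hej : j + e = ℓ := by omega
    have hlc : (ℓ : ℝ) = (j : ℝ) + e := by exact_mod_cast congrArg (Nat.cast (R := ℝ)) hej.symm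
    have hme : m - j + ℓ = m + 1 + e - 1 := by omega
    have hA : (((2 * e - 1)‼ : ℕ) : ℝ) ≠ 0 := by
      exact_mod_cast (Nat.doubleFactorial_pos _).ne'
    have hB : (((2 * (m - j + ℓ) + 1)‼ : ℕ) : ℝ) ≠ 0 := by
      exact_mod_cast (Nat.doubleFactorial_pos _).ne'
    have key : (((2 * e - 1)‼ : ℕ) : ℝ) *
        ∏ k ∈ Finset.range (m + 1), (2 * (k : ℝ) - 2 * j + 1 + 2 * ℓ) =
        (((2 * (m - j + ℓ) + 1)‼ : ℕ) : ℝ) := by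
      have hsplit := Finset.prod_range_add (fun t : ℕ => ((2 * t + 1 : ℕ) : ℝ)) e (m + 1)
      have hc : ∀ k ∈ Finset.range (m + 1),
          ((2 * (e + k) + 1 : ℕ) : ℝ) = (2 * (k : ℝ) - 2 * j + 1 + 2 * ℓ) := by
        intro k _
        rw [hlc]
        push_cast
        ring
      rw [Finset.prod_congr rfl hc] at hsplit
      have hP1 : ∏ t ∈ Finset.range e, ((2 * t + 1 : ℕ) : ℝ) = (((2 * e - 1)‼ : ℕ) : ℝ) := by
        rw [← Nat.cast_prod, odd_prod_eq]
      have hP2 : ∏ t ∈ Finset.range (e + (m + 1)), ((2 * t + 1 : ℕ) : ℝ) =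
          (((2 * (m - j + ℓ) + 1)‼ : ℕ) : ℝ) := by
        rw [← Nat.cast_prod, odd_prod_eq,
          show 2 * (e + (m + 1)) - 1 = 2 * (m - j + ℓ) + 1 by omega]
      rw [hP2, hP1] at hsplit
      exact hsplit.symm
    simp only [one_div]
    rw [Finset.prod_inv_distrib]
    have hprod : ∏ k ∈ Finset.range (m + 1), (2 * (k : ℝ) - 2 * j + 1 + 2 * ℓ) =
        (((2 * (m - j + ℓ) + 1)‼ : ℕ) : ℝ) / (((2 * e - 1)‼ : ℕ) : ℝ) := by
      rw [eq_div_iff hA, mul_comm]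
      exact key
    rw [hprod]
    rw [inv_div]
end
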